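/- The expected Euclidean distance between two independent uniformly random points in the unit square equals (2 + √2 + 5·arcsinh(1))/15 ≈ 0.5214. -/

import Mathlib

open MeasureTheory Set intervalIntegral Real Filter
noncomputable section
def Af (a t : ℝ) : ℝ := (t * Real.sqrt (a^2 + t^2) + a^2 * Real.arsinh (t/a)) / 2
def Bf (a t : ℝ) : ℝ :=
  ((a^2 + t^2) * Real.sqrt (a^2 + t^2) / 3
    + a^2 * (t * Real.arsinh (t/a) - Real.sqrt (a^2 + t^2))) / 2

lemma hasDerivAt_sqrt_aux {c : ℝ} (hc : 0 < c) (t : ℝ) :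
    HasDerivAt (fun t : ℝ => Real.sqrt (c + t^2)) (t / Real.sqrt (c + t^2)) t := by
  have h : HasDerivAt (fun t : ℝ => c + t^2) (2*t) t := by
    simpa using (hasDerivAt_pow 2 t).const_add c
  have hne : c + t^2 ≠ 0 := by positivity
  have := (Real.hasDerivAt_sqrt hne).comp t h
  refine this.congr_deriv (Eq.symm ?_)
  have hs : (0:ℝ) < Real.sqrt (c + t^2) := Real.sqrt_pos.mpr (by positivity)
  field_simp

lemma sqrt_div_sq {a t : ℝ} (ha : 0 < a) :
    Real.sqrt (1 + (t/a)^2) = Real.sqrt (a^2 + t^2) / a := by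
  rw [show (1:ℝ) + (t/a)^2 = (a^2+t^2)/a^2 by field_simp,
    Real.sqrt_div (by positivity) _, Real.sqrt_sq ha.le]

lemma hasDerivAt_arsinh_div {a : ℝ} (ha : 0 < a) (t : ℝ) :
    HasDerivAt (fun t : ℝ => Real.arsinh (t/a)) (1 / Real.sqrt (a^2 + t^2)) t := by
  have h1 : HasDerivAt (fun t : ℝ => t/a) (1/a) t := by
    simpa using (hasDerivAt_id t).div_const a
  have := (Real.hasDerivAt_arsinh (t/a)).comp t h1
  refine this.congr_deriv (Eq.symm ?_)
  rw [sqrt_div_sq ha]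
  have hs : (0:ℝ) < Real.sqrt (a^2+t^2) := Real.sqrt_pos.mpr (by positivity)
  field_simp

lemma hasDerivAt_Af {a : ℝ} (ha : 0 < a) (t : ℝ) :
    HasDerivAt (Af a) (Real.sqrt (a^2 + t^2)) t := by
  have hs : (0:ℝ) < Real.sqrt (a^2+t^2) := Real.sqrt_pos.mpr (by positivity)
  have hs2 : Real.sqrt (a^2+t^2) ^ 2 = a^2 + t^2 := Real.sq_sqrt (by positivity)
  have h1 : HasDerivAt (fun t : ℝ => t * Real.sqrt (a^2 + t^2))
      (1 * Real.sqrt (a^2+t^2) + t * (t / Real.sqrt (a^2+t^2))) t :=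
    (hasDerivAt_id t).mul (hasDerivAt_sqrt_aux (by positivity) t)
  have h2 := (hasDerivAt_arsinh_div ha t).const_mul (a^2)
  have := (h1.add h2).div_const 2
  refine this.congr_deriv (Eq.symm ?_)
  field_simp
  nlinarith [hs2]

lemma hasDerivAt_Bf {a : ℝ} (ha : 0 < a) (t : ℝ) :
    HasDerivAt (Bf a) (Af a t) t := by
  have hs : (0:ℝ) < Real.sqrt (a^2+t^2) := Real.sqrt_pos.mpr (by positivity)
  have hs2 : Real.sqrt (a^2+t^2) ^ 2 = a^2 + t^2 := Real.sq_sqrt (by positivity)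
  have hsq := hasDerivAt_sqrt_aux (show (0:ℝ) < a^2 by positivity) t
  have h1 : HasDerivAt (fun t : ℝ => (a^2 + t^2) * Real.sqrt (a^2 + t^2))
      ((2*t) * Real.sqrt (a^2+t^2) + (a^2+t^2) * (t / Real.sqrt (a^2+t^2))) t := by
    exact (by simpa using (hasDerivAt_pow 2 t).const_add (a^2) : HasDerivAt (fun t : ℝ => a^2 + t^2) (2*t) t).mul hsq
  have h2 : HasDerivAt (fun t : ℝ => t * Real.arsinh (t/a))
      (1 * Real.arsinh (t/a) + t * (1 / Real.sqrt (a^2+t^2))) t :=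
    (hasDerivAt_id t).mul (hasDerivAt_arsinh_div ha t)
  have := ((h1.div_const 3).add (((h2.sub hsq).const_mul (a^2)))).div_const 2
  refine this.congr_deriv (Eq.symm ?_)
  have hs2' : Real.sqrt (t^2+a^2) ^ 2 = t^2 + a^2 := by
    rw [add_comm]; exact hs2
  unfold Af
  field_simp
  linear_combination t * hs2

def Jf (a : ℝ) : ℝ :=
  (a^2+1) * Real.sqrt (a^2+1) / 3 + a^2 * Real.arsinh (1/a)
    - a^2 * Real.sqrt (a^2+1) + 2/3 * a^3
def Kf (a : ℝ) : ℝ :=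
  -(a * (a^2+1) * Real.sqrt (a^2+1)) / 6 + 5 * a * Real.sqrt (a^2+1) / 12
    + Real.arsinh a / 12 + a^3 * Real.arsinh (1/a) / 3 + a^4 / 6
def Mf (a : ℝ) : ℝ :=
  Real.sqrt (a^2+1) * (-8*a^4 + 9*a^2 + 2) / 60 + a^4 * Real.arsinh (1/a) / 4
    + 2 * a^5 / 15

lemma hasDerivAt_sqrt_sq_add_one (a : ℝ) :
    HasDerivAt (fun x : ℝ => Real.sqrt (x^2+1)) (a / Real.sqrt (a^2+1)) a := by
  have h : HasDerivAt (fun x : ℝ => x^2+1) (2*a) a := by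
    simpa using (hasDerivAt_pow 2 a).add_const 1
  have hne : a^2+1 ≠ 0 := by positivity
  have := (Real.hasDerivAt_sqrt hne).comp a h
  refine this.congr_deriv (Eq.symm ?_)
  have hs : (0:ℝ) < Real.sqrt (a^2+1) := Real.sqrt_pos.mpr (by positivity)
  field_simp

lemma sqrt_one_add_inv_sq {a : ℝ} (ha : 0 < a) :
    Real.sqrt (1 + (1/a)^2) = Real.sqrt (a^2+1) / a := by
  rw [show (1:ℝ) + (1/a)^2 = (a^2+1)/a^2 by field_simp,
    Real.sqrt_div (by positivity) _, Real.sqrt_sq ha.le]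

lemma hasDerivAt_arsinh_inv {a : ℝ} (ha : 0 < a) :
    HasDerivAt (fun x : ℝ => Real.arsinh (1/x))
      (-(1 / (a * Real.sqrt (a^2+1)))) a := by
  have h1 : HasDerivAt (fun x : ℝ => 1/x) (-(1/a^2)) a := by
    simpa [one_div] using hasDerivAt_inv ha.ne'
  have := (Real.hasDerivAt_arsinh (1/a)).comp a h1
  refine this.congr_deriv (Eq.symm ?_)
  rw [sqrt_one_add_inv_sq ha]
  have hs : (0:ℝ) < Real.sqrt (a^2+1) := Real.sqrt_pos.mpr (by positivity)
  field_simp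

lemma hasDerivAt_arsinh' (a : ℝ) :
    HasDerivAt Real.arsinh (1 / Real.sqrt (a^2+1)) a := by
  have := Real.hasDerivAt_arsinh a
  convert this using 1
  rw [add_comm (a^2) 1, one_div]

lemma hasDerivAt_Kf {a : ℝ} (ha : 0 < a) : HasDerivAt Kf (Jf a) a := by
  have hs : (0:ℝ) < Real.sqrt (a^2+1) := Real.sqrt_pos.mpr (by positivity)
  have hs2 : Real.sqrt (a^2+1) ^ 2 = a^2+1 := Real.sq_sqrt (by positivity)
  have hsa := hasDerivAt_sqrt_sq_add_one a
  have hA := ((((hasDerivAt_id a).mul ((by simpa using (hasDerivAt_pow 2 a).add_const 1 :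
      HasDerivAt (fun x : ℝ => x^2+1) (2*a) a))).mul hsa).neg).div_const 6
  have hB := (((hasDerivAt_id a).const_mul (5:ℝ)).mul hsa).div_const 12
  have hC := (hasDerivAt_arsinh' a).div_const 12
  have hD := ((hasDerivAt_pow 3 a).mul (hasDerivAt_arsinh_inv ha)).div_const 3
  have hE := (hasDerivAt_pow 4 a).div_const 6
  have := ((((hA.add hB).add hC).add hD).add hE)
  refine this.congr_deriv (Eq.symm ?_)
  unfold Jf
  set s := Real.sqrt (a^2+1) with hsdef
  field_simp
  simp only [id_eq, Pi.mul_apply]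
  linear_combination ((18:ℝ) - 36*a^2) * hs2

lemma hasDerivAt_Mf {a : ℝ} (ha : 0 < a) : HasDerivAt Mf (a * Jf a) a := by
  have hs : (0:ℝ) < Real.sqrt (a^2+1) := Real.sqrt_pos.mpr (by positivity)
  have hs2 : Real.sqrt (a^2+1) ^ 2 = a^2+1 := Real.sq_sqrt (by positivity)
  have hsa := hasDerivAt_sqrt_sq_add_one a
  have hpoly : HasDerivAt (fun x : ℝ => -8*x^4 + 9*x^2 + 2)
      (-32*a^3 + 18*a) a := by
    have := (((hasDerivAt_pow 4 a).const_mul (-8:ℝ)).add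
      ((hasDerivAt_pow 2 a).const_mul (9:ℝ))).add_const 2
    refine this.congr_deriv (Eq.symm ?_)
    push_cast; ring
  have hA := (hsa.mul hpoly).div_const 60
  have hB := ((hasDerivAt_pow 4 a).mul (hasDerivAt_arsinh_inv ha)).div_const 4
  have hC := ((hasDerivAt_pow 5 a).const_mul (2:ℝ)).div_const 15
  have := (hA.add hB).add hC
  refine this.congr_deriv (Eq.symm ?_)
  unfold Jf
  set s := Real.sqrt (a^2+1) with hsdef
  field_simp
  linear_combination ((360:ℝ)*a - 1440*a^3) * hs2

def Jx (u : ℝ) : ℝ := Jf |u|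
lemma arsinh_le_two_mul {x : ℝ} (hx : 0 ≤ x) : Real.arsinh x ≤ 2 * x := by
  have h1 : Real.sqrt (1 + x^2) ≤ 1 + x := by
    rw [show (1:ℝ) + x = Real.sqrt ((1+x)^2) by rw [Real.sqrt_sq (by linarith)]]
    exact Real.sqrt_le_sqrt (by nlinarith)
  have h2 : (0:ℝ) < x + Real.sqrt (1 + x^2) := by
    have : (0:ℝ) < Real.sqrt (1 + x^2) := Real.sqrt_pos.mpr (by positivity)
    linarith
  calc Real.arsinh x = Real.log (x + Real.sqrt (1 + x^2)) := rfl
    _ ≤ x + Real.sqrt (1 + x^2) - 1 := Real.log_le_sub_one_of_pos h2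
    _ ≤ 2 * x := by linarith

lemma pow_arsinh_le {x : ℝ} (hx : 0 < x) (n : ℕ) :
    x^(n+2) * Real.arsinh (1/x) ≤ 2 * x^(n+1) := by
  have h := arsinh_le_two_mul (le_of_lt (by positivity : (0:ℝ) < 1/x))
  calc x^(n+2) * Real.arsinh (1/x) ≤ x^(n+2) * (2 * (1/x)) := by
        apply mul_le_mul_of_nonneg_left h (by positivity)
    _ = 2 * x^(n+1) := by field_simp; ring

lemma pow_arsinh_nonneg {x : ℝ} (hx : 0 ≤ x) (n : ℕ) :
    0 ≤ x^(n+2) * Real.arsinh (1/x) := by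
  have : 0 ≤ Real.arsinh (1/x) := Real.arsinh_nonneg_iff.mpr (by positivity)
  positivity

lemma contOn_pow_arsinh (n : ℕ) :
    ContinuousOn (fun a : ℝ => a^(n+2) * Real.arsinh (1/a)) (Icc 0 1) := by
  intro x hx
  rcases eq_or_lt_of_le hx.1 with hx0 | hx0
  · subst hx0
    have hb : ∀ y ∈ Icc (0:ℝ) 1, ‖y^(n+2) * Real.arsinh (1/y)‖ ≤ 2 * y^(n+1) := by
      intro y hy
      rcases eq_or_lt_of_le hy.1 with h0 | h0
      · subst h0; simp
      · rw [Real.norm_of_nonneg (pow_arsinh_nonneg h0.le n)]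
        exact pow_arsinh_le h0 n
    have hev : ∀ᶠ y in nhdsWithin (0:ℝ) (Icc 0 1),
        ‖y^(n+2) * Real.arsinh (1/y)‖ ≤ 2 * y^(n+1) :=
      eventually_nhdsWithin_of_forall hb
    have hg : Tendsto (fun y : ℝ => 2 * y^(n+1)) (nhdsWithin (0:ℝ) (Icc 0 1)) (nhds 0) := by
      have hc : Continuous (fun y : ℝ => 2 * y^(n+1)) := continuous_const.mul (continuous_pow (n+1))
      have := (hc.tendsto 0).mono_left (nhdsWithin_le_nhds (s := Icc (0:ℝ) 1))
      simpa using this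
    have := squeeze_zero_norm' hev hg
    unfold ContinuousWithinAt
    simpa using this
  · apply ContinuousAt.continuousWithinAt
    exact (continuousAt_pow _ _).mul
      (Real.continuous_arsinh.continuousAt.comp
        (continuousAt_const.div continuousAt_id hx0.ne'))

lemma cont_abs_arsinh : Continuous (fun u : ℝ => u^2 * Real.arsinh (1/|u|)) := by
  rw [continuous_iff_continuousAt]
  intro u
  by_cases hu : u = 0
  · subst hu
    have hb : ∀ y : ℝ, ‖y^2 * Real.arsinh (1/|y|)‖ ≤ 2 * |y| := by
      intro y
      by_cases h0 : y = 0
      · subst h0; simp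
      · have hy : (0:ℝ) < |y| := abs_pos.mpr h0
        have h := pow_arsinh_le hy 0
        have h2 := pow_arsinh_nonneg hy.le 0
        rw [show y^2 = |y|^(0+2) by rw [← sq_abs]]
        rw [Real.norm_of_nonneg h2]
        simpa using h
    have hg : Tendsto (fun y : ℝ => 2 * |y|) (nhds 0) (nhds 0) := by
      have hc : Continuous (fun y : ℝ => 2 * |y|) := continuous_const.mul continuous_abs
      have := hc.tendsto (0:ℝ)
      simpa using this
    have := squeeze_zero_norm hb hg
    unfold ContinuousAt
    simpa using this
  · exact (continuousAt_pow _ _).mul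
      (Real.continuous_arsinh.continuousAt.comp
        (continuousAt_const.div continuous_abs.continuousAt (abs_ne_zero.mpr hu)))

lemma cont_sqrt_sq_one : Continuous (fun u : ℝ => Real.sqrt (u^2+1)) :=
  Real.continuous_sqrt.comp (by continuity)

lemma cont_Jx : Continuous Jx := by
  have : Jx = fun u : ℝ => (u^2+1) * Real.sqrt (u^2+1) / 3
      + u^2 * Real.arsinh (1/|u|) - u^2 * Real.sqrt (u^2+1) + 2/3 * |u|^3 := by
    funext u
    unfold Jx Jf
    rw [sq_abs]
  rw [this]
  apply Continuous.add
  apply Continuous.sub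
  apply Continuous.add
  · exact ((by continuity : Continuous fun u:ℝ => u^2+1).mul cont_sqrt_sq_one).div_const 3
  · exact cont_abs_arsinh
  · exact (continuous_pow 2).mul cont_sqrt_sq_one
  · exact continuous_const.mul ((continuous_abs).pow 3)

lemma Jx_even (u : ℝ) : Jx (-u) = Jx u := by simp [Jx]

lemma contOn_Jf : ContinuousOn Jf (Icc 0 1) := by
  have h := cont_Jx.continuousOn (s := Icc 0 1)
  apply h.congr
  intro x hx
  unfold Jx
  rw [abs_of_nonneg hx.1]

lemma contOn_Kf : ContinuousOn Kf (Icc 0 1) := by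
  unfold Kf
  apply ContinuousOn.add
  apply ContinuousOn.add
  apply ContinuousOn.add
  apply ContinuousOn.add
  · exact ((((continuous_id.mul (by continuity : Continuous fun x:ℝ => x^2+1)).mul cont_sqrt_sq_one)).neg.div_const 6).continuousOn
  · exact (((continuous_const.mul continuous_id).mul cont_sqrt_sq_one).div_const 12).continuousOn
  · exact (Real.continuous_arsinh.div_const 12).continuousOn
  · have h : ContinuousOn (fun a : ℝ => a^3 * Real.arsinh (1/a)) (Icc 0 1) := by
      simpa using contOn_pow_arsinh 1
    exact h.div_const 3
  · exact ((continuous_pow 4).div_const 6).continuousOn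

lemma contOn_Mf : ContinuousOn Mf (Icc 0 1) := by
  unfold Mf
  apply ContinuousOn.add
  apply ContinuousOn.add
  · exact ((cont_sqrt_sq_one.mul (by continuity : Continuous fun x:ℝ => -8*x^4+9*x^2+2)).div_const 60).continuousOn
  · have h : ContinuousOn (fun a : ℝ => a^4 * Real.arsinh (1/a)) (Icc 0 1) := by
      simpa using contOn_pow_arsinh 2
    exact h.div_const 4
  · exact ((continuous_const.mul (continuous_pow 5)).div_const 15).continuousOn

lemma cont_sqrt_param (a y₁ : ℝ) :
    Continuous (fun y₂ : ℝ => Real.sqrt (a^2 + (y₁ - y₂)^2)) :=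
  Real.continuous_sqrt.comp (by continuity)

lemma cont_Af {a : ℝ} (ha : 0 < a) : Continuous (Af a) := by
  unfold Af
  apply Continuous.div_const
  exact (continuous_id.mul (Real.continuous_sqrt.comp (by continuity))).add
    (continuous_const.mul (Real.continuous_arsinh.comp (continuous_id.div_const a)))

lemma integral_sqrt_y2 {a : ℝ} (ha : 0 < a) (y₁ : ℝ) :
    ∫ y₂ in (0:ℝ)..1, Real.sqrt (a^2 + (y₁ - y₂)^2) = Af a y₁ - Af a (y₁ - 1) := by
  have hd : ∀ y₂ ∈ uIcc (0:ℝ) 1, HasDerivAt (fun y₂ : ℝ => -Af a (y₁ - y₂))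
      (Real.sqrt (a^2 + (y₁ - y₂)^2)) y₂ := by
    intro y₂ _
    have hc : HasDerivAt (fun y₂ : ℝ => y₁ - y₂) (-1) y₂ := by
      simpa using (hasDerivAt_id y₂).const_sub y₁
    have := ((hasDerivAt_Af ha (y₁ - y₂)).comp y₂ hc).neg
    refine this.congr_deriv (Eq.symm ?_)
    ring
  rw [intervalIntegral.integral_eq_sub_of_hasDerivAt hd
    ((cont_sqrt_param a y₁).intervalIntegrable 0 1)]
  simp only [sub_zero]
  ring

lemma Dval {a : ℝ} (ha : 0 < a) :
    (∫ y₁ in (0:ℝ)..1, ∫ y₂ in (0:ℝ)..1, Real.sqrt (a^2 + (y₁ - y₂)^2)) = Jf a := by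
  rw [intervalIntegral.integral_congr
    (g := fun y₁ => Af a y₁ - Af a (y₁ - 1)) (fun y₁ _ => integral_sqrt_y2 ha y₁)]
  have hd : ∀ y₁ ∈ uIcc (0:ℝ) 1, HasDerivAt (fun y₁ => Bf a y₁ - Bf a (y₁ - 1))
      (Af a y₁ - Af a (y₁ - 1)) y₁ := by
    intro y₁ _
    have hc : HasDerivAt (fun y₁ : ℝ => y₁ - 1) (1:ℝ) y₁ := by
      simpa using (hasDerivAt_id y₁).sub_const 1
    have h2 := (hasDerivAt_Bf ha (y₁ - 1)).comp y₁ hc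
    have := (hasDerivAt_Bf ha y₁).sub h2
    refine this.congr_deriv (Eq.symm ?_)
    ring
  have hint : IntervalIntegrable (fun y₁ => Af a y₁ - Af a (y₁ - 1)) volume 0 1 :=
    ((cont_Af ha).sub ((cont_Af ha).comp (by continuity))).intervalIntegrable 0 1
  rw [intervalIntegral.integral_eq_sub_of_hasDerivAt hd hint]
  unfold Bf Jf
  norm_num
  rw [Real.sqrt_sq ha.le]
  rw [show (-1 : ℝ)/a = -(1/a) by ring, Real.arsinh_neg]
  ring

def Hf (t : ℝ) : ℝ := ∫ u in (0:ℝ)..t, Jx u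

lemma cont_Hf : Continuous Hf :=
  intervalIntegral.continuous_primitive (fun a b => cont_Jx.intervalIntegrable a b) 0

lemma swapI {f : ℝ → ℝ → ℝ} (hf : Continuous (Function.uncurry f)) :
    (∫ x in (0:ℝ)..1, ∫ y in (0:ℝ)..1, f x y)
      = ∫ y in (0:ℝ)..1, ∫ x in (0:ℝ)..1, f x y := by
  have h1 : IntegrableOn (Function.uncurry f) (Icc 0 1 ×ˢ Icc 0 1) (volume.prod volume) :=
    hf.continuousOn.integrableOn_compact (isCompact_Icc.prod isCompact_Icc)
  have h2 : Integrable (Function.uncurry f)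
      ((volume.restrict (Ioc (0:ℝ) 1)).prod (volume.restrict (Ioc (0:ℝ) 1))) := by
    rw [Measure.prod_restrict]
    exact h1.mono_set (Set.prod_mono Ioc_subset_Icc_self Ioc_subset_Icc_self)
  simp only [intervalIntegral.integral_of_le zero_le_one]
  exact MeasureTheory.integral_integral_swap h2

lemma Dval' {b : ℝ} (hb : b ≠ 0) :
    (∫ y₁ in (0:ℝ)..1, ∫ y₂ in (0:ℝ)..1, Real.sqrt (b^2 + (y₁ - y₂)^2)) = Jf |b| := by
  have := Dval (abs_pos.mpr hb)
  rw [← this]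
  apply intervalIntegral.integral_congr
  intro y₁ _
  apply intervalIntegral.integral_congr
  intro y₂ _
  rw [sq_abs]

lemma step3 (x₁ : ℝ) :
    (∫ x₂ in (0:ℝ)..1, ∫ y₁ in (0:ℝ)..1, ∫ y₂ in (0:ℝ)..1,
        Real.sqrt ((x₁ - x₂)^2 + (y₁ - y₂)^2))
      = ∫ x₂ in (0:ℝ)..1, Jx (x₁ - x₂) := by
  apply intervalIntegral.integral_congr_ae
  have hae : ∀ᵐ x₂ : ℝ, x₂ ≠ x₁ := by
    rw [ae_iff]
    have : {x₂ : ℝ | ¬ x₂ ≠ x₁} = {x₁} := by ext; simp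
    rw [this]
    exact measure_singleton x₁
  filter_upwards [hae] with x₂ hne _
  exact Dval' (sub_ne_zero.mpr (Ne.symm hne))

lemma step4 (x₁ : ℝ) : (∫ x₂ in (0:ℝ)..1, Jx (x₁ - x₂)) = Hf x₁ + Hf (1 - x₁) := by
  rw [intervalIntegral.integral_comp_sub_left (fun u => Jx u) x₁, sub_zero]
  rw [← intervalIntegral.integral_add_adjacent_intervals (a := x₁ - 1) (b := 0) (c := x₁)
    (cont_Jx.intervalIntegrable _ _) (cont_Jx.intervalIntegrable _ _)]
  rw [add_comm]
  congr 1
  have h : ∫ u in (x₁-1)..(0:ℝ), Jx u = ∫ u in (x₁-1)..(0:ℝ), Jx (-u) :=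
    intervalIntegral.integral_congr (fun u _ => (Jx_even u).symm)
  rw [h, intervalIntegral.integral_comp_neg, neg_zero, neg_sub]
  rfl

lemma int_Jf_eval : (∫ u in (0:ℝ)..1, Jf u) = Kf 1 - Kf 0 := by
  apply intervalIntegral.integral_eq_sub_of_hasDeriv_right_of_le zero_le_one contOn_Kf
  · exact fun x hx => (hasDerivAt_Kf hx.1).hasDerivWithinAt
  · apply ContinuousOn.intervalIntegrable
    rw [uIcc_of_le zero_le_one]
    exact contOn_Jf

lemma int_tJf_eval : (∫ u in (0:ℝ)..1, u * Jf u) = Mf 1 - Mf 0 := by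
  apply intervalIntegral.integral_eq_sub_of_hasDeriv_right_of_le zero_le_one contOn_Mf
  · exact fun x hx => (hasDerivAt_Mf hx.1).hasDerivWithinAt
  · apply ContinuousOn.intervalIntegrable
    rw [uIcc_of_le zero_le_one]
    exact continuousOn_id.mul contOn_Jf

lemma Jx_eq_Jf {u : ℝ} (hu : u ∈ Icc (0:ℝ) 1) : Jx u = Jf u := by
  unfold Jx; rw [abs_of_nonneg hu.1]

lemma int_Hf : (∫ t in (0:ℝ)..1, Hf t) = Hf 1 - (Mf 1 - Mf 0) := by
  have hH : ∀ t : ℝ, HasDerivAt Hf (Jx t) t :=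
    fun t => (cont_Jx.integral_hasStrictDerivAt 0 t).hasDerivAt
  have hFt : ∀ t ∈ uIcc (0:ℝ) 1, HasDerivAt (fun t => t * Hf t) (Hf t + t * Jx t) t := by
    intro t _
    have := (hasDerivAt_id t).mul (hH t)
    refine this.congr_deriv (Eq.symm ?_)
    simp [id_eq, mul_comm]
  have hti : IntervalIntegrable (fun t : ℝ => t * Jx t) volume 0 1 :=
    (continuous_id.mul cont_Jx).intervalIntegrable 0 1
  have hsum : Continuous (fun t : ℝ => Hf t + t * Jx t) :=
    cont_Hf.add (continuous_id.mul cont_Jx)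
  have key := intervalIntegral.integral_eq_sub_of_hasDerivAt hFt
    (hsum.intervalIntegrable 0 1)
  rw [intervalIntegral.integral_add (cont_Hf.intervalIntegrable 0 1) hti] at key
  have h2 : (∫ t in (0:ℝ)..1, t * Jx t) = Mf 1 - Mf 0 := by
    rw [← int_tJf_eval]
    apply intervalIntegral.integral_congr
    intro u hu
    rw [uIcc_of_le zero_le_one] at hu
    show u * Jx u = u * Jf u
    rw [Jx_eq_Jf hu]
  rw [h2] at key
  simp only [one_mul, zero_mul] at key
  linarith

lemma Hf_one : Hf 1 = Kf 1 - Kf 0 := by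
  rw [← int_Jf_eval]
  apply intervalIntegral.integral_congr
  intro u hu
  rw [uIcc_of_le zero_le_one] at hu
  show Jx u = Jf u
  exact Jx_eq_Jf hu

/-- The expected Euclidean distance between two independent uniform points of
the unit square equals `(2 + √2 + 5·arcsinh 1)/15`. -/
theorem expected_euclidean_distance_unit_square :
    ∫ x₁ in (0:ℝ)..1, ∫ y₁ in (0:ℝ)..1, ∫ x₂ in (0:ℝ)..1, ∫ y₂ in (0:ℝ)..1,
      Real.sqrt ((x₁ - x₂)^2 + (y₁ - y₂)^2)
    = (2 + Real.sqrt 2 + 5 * Real.arsinh 1) / 15 := by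
  have hstep : ∀ x₁ : ℝ,
      (∫ y₁ in (0:ℝ)..1, ∫ x₂ in (0:ℝ)..1, ∫ y₂ in (0:ℝ)..1,
        Real.sqrt ((x₁ - x₂)^2 + (y₁ - y₂)^2)) = Hf x₁ + Hf (1 - x₁) := by
    intro x₁
    have hsw := swapI (f := fun y₁ x₂ => ∫ y₂ in (0:ℝ)..1,
        Real.sqrt ((x₁ - x₂)^2 + (y₁ - y₂)^2))
      (by
        apply intervalIntegral.continuous_parametric_intervalIntegral_of_continuous'
          (f := fun (p : ℝ × ℝ) y₂ => Real.sqrt ((x₁ - p.2)^2 + (p.1 - y₂)^2))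
        apply Real.continuous_sqrt.comp
        fun_prop)
    rw [hsw, step3 x₁, step4 x₁]
  rw [intervalIntegral.integral_congr (g := fun x₁ => Hf x₁ + Hf (1 - x₁))
    (fun x₁ _ => hstep x₁)]
  have hint2 : IntervalIntegrable (fun x : ℝ => Hf (1 - x)) volume 0 1 :=
    (cont_Hf.comp (by continuity : Continuous fun x:ℝ => 1 - x)).intervalIntegrable 0 1
  rw [intervalIntegral.integral_add (cont_Hf.intervalIntegrable 0 1) hint2]
  have h2 : (∫ x in (0:ℝ)..1, Hf (1 - x)) = ∫ x in (0:ℝ)..1, Hf x := by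
    rw [intervalIntegral.integral_comp_sub_left Hf 1]
    norm_num
  rw [h2, int_Hf, Hf_one]
  -- numeric evaluation
  have e0 : Real.sqrt ((0:ℝ)^2+1) = 1 := by norm_num
  have e1 : Real.sqrt ((1:ℝ)^2+1) = Real.sqrt 2 := by norm_num
  unfold Kf Mf
  rw [e0, e1]
  norm_num [Real.arsinh_zero]
  ring

end
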